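/- Let λ : A → ℝ be a lifting function and F a face of the regular decomposition S_λ, so that there is a vector v ∈ ℝ^d and δ ∈ ℝ with v·a + λ(a) ≤ δ for all a ∈ A, with equality exactly for a ∈ F. Then for any fixed x ∈ ℝ_{>0}^d and w ∈ ℝ_{>0}^A, the points [w_a t^{v·a + λ(a)} x^a : a ∈ A] of the simplex Δ^A converge, as t → ∞, to the point z with z_f = [w_f x^f : f ∈ F] for f ∈ F and z_a = 0 for a ∉ F. -/
import Mathlib


open Finset Filter

/-- Toric degeneration limit: if `F` is the face of the regular decomposition of `A`
exposed by `v` and `λ` (so `v·a + λ(a) ≤ δ` on `A` with equality exactly on `F`), then for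
fixed `x ∈ ℝ_{>0}^d` and positive weights `w`, the points
`[w_a t^{v·a + λ(a)} x^a : a ∈ A]` of the simplex `Δ^A` converge, as `t → ∞`, to the point
supported on `F` with coordinates `[w_f x^f : f ∈ F]`. -/
theorem toric_degeneration_limit (d : ℕ) (A F : Finset (Fin d → ℤ))
    (hFA : F ⊆ A) (hFne : F.Nonempty)
    (v : Fin d → ℝ) (lam : (Fin d → ℤ) → ℝ) (δ : ℝ)
    (hle : ∀ a ∈ A, (∑ i, v i * (a i : ℝ)) + lam a ≤ δ)
    (hF : ∀ a ∈ A, (a ∈ F ↔ (∑ i, v i * (a i : ℝ)) + lam a = δ))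
    (x : Fin d → ℝ) (hx : ∀ i, 0 < x i)
    (w : (Fin d → ℤ) → ℝ) (hw : ∀ a ∈ A, 0 < w a) :
    Tendsto
      (fun t : ℝ => fun a : Fin d → ℤ =>
        (if a ∈ A then
            w a * t ^ ((∑ i, v i * (a i : ℝ)) + lam a) * ∏ i, x i ^ (a i)
          else 0) /
        (∑ b ∈ A, w b * t ^ ((∑ i, v i * (b i : ℝ)) + lam b) * ∏ i, x i ^ (b i)))
      atTop
      (nhds (fun a : Fin d → ℤ =>
        if a ∈ F then
          (w a * ∏ i, x i ^ (a i)) / (∑ f ∈ F, w f * ∏ i, x i ^ (f i))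
        else 0)) := by
  classical
  set μ : (Fin d → ℤ) → ℝ := fun a => (∑ i, v i * (a i : ℝ)) + lam a with hμ
  set X : (Fin d → ℤ) → ℝ := fun a => w a * ∏ i, x i ^ (a i) with hX
  have hXpos : ∀ a ∈ A, 0 < X a := fun a ha =>
    mul_pos (hw a ha) (Finset.prod_pos fun i _ => zpow_pos (hx i) _)
  have hS : 0 < ∑ f ∈ F, X f := Finset.sum_pos (fun f hf => hXpos f (hFA hf)) hFne
  have hlim : ∀ a ∈ A, Tendsto (fun t : ℝ => t ^ (μ a - δ)) atTop
      (nhds (if a ∈ F then 1 else 0)) := by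
    intro a ha
    by_cases haF : a ∈ F
    · have h0 : μ a - δ = 0 := by rw [hμ]; simp only; rw [(hF a ha).1 haF]; ring
      simp only [haF, if_true, h0, Real.rpow_zero]
      exact tendsto_const_nhds
    · have hlt : 0 < δ - μ a := by
        have := lt_of_le_of_ne (hle a ha) (fun h => haF ((hF a ha).2 h))
        simp only [hμ]
        linarith
      have h := tendsto_rpow_neg_atTop hlt
      simpa [haF, neg_sub] using h
  have hdenom : Tendsto (fun t : ℝ => ∑ b ∈ A, X b * t ^ (μ b - δ)) atTop
      (nhds (∑ f ∈ F, X f)) := by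
    have h := tendsto_finset_sum A
      (fun b (hb : b ∈ A) => (tendsto_const_nhds (x := X b)).mul (hlim b hb))
    have heq : (∑ b ∈ A, X b * (if b ∈ F then 1 else 0)) = ∑ f ∈ F, X f := by
      rw [Finset.sum_congr rfl (fun b _ => by rw [mul_ite, mul_one, mul_zero]),
        Finset.sum_ite_mem, Finset.inter_eq_right.mpr hFA]
    rwa [heq] at h
  rw [tendsto_pi_nhds]
  intro a
  by_cases haA : a ∈ A
  · have key : Tendsto (fun t : ℝ =>
        (X a * t ^ (μ a - δ)) / (∑ b ∈ A, X b * t ^ (μ b - δ))) atTop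
        (nhds ((X a * (if a ∈ F then 1 else 0)) / (∑ f ∈ F, X f))) :=
      ((tendsto_const_nhds (x := X a)).mul (hlim a haA)).div hdenom hS.ne'
    have heq : (fun t : ℝ =>
        (X a * t ^ (μ a - δ)) / (∑ b ∈ A, X b * t ^ (μ b - δ))) =ᶠ[atTop]
        (fun t : ℝ =>
          (if a ∈ A then w a * t ^ (μ a) * ∏ i, x i ^ (a i) else 0) /
          (∑ b ∈ A, w b * t ^ (μ b) * ∏ i, x i ^ (b i))) := by
      filter_upwards [eventually_gt_atTop (0 : ℝ)] with t ht
      have hrp : ∀ c : ℝ, t ^ (c - δ) = t ^ c * t ^ (-δ) := fun c => by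
        rw [← Real.rpow_add ht]; ring_nf
      have hne : t ^ (-δ) ≠ 0 := (Real.rpow_pos_of_pos ht _).ne'
      simp only [haA, if_true]
      calc (X a * t ^ (μ a - δ)) / (∑ b ∈ A, X b * t ^ (μ b - δ))
          = ((w a * t ^ (μ a) * ∏ i, x i ^ (a i)) * t ^ (-δ)) /
            ((∑ b ∈ A, w b * t ^ (μ b) * ∏ i, x i ^ (b i)) * t ^ (-δ)) := by
            rw [Finset.sum_mul]
            congr 1
            · rw [hrp]; simp only [hX]; ring
            · exact Finset.sum_congr rfl fun b _ => by rw [hrp]; simp only [hX]; ring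
        _ = (w a * t ^ (μ a) * ∏ i, x i ^ (a i)) /
            (∑ b ∈ A, w b * t ^ (μ b) * ∏ i, x i ^ (b i)) :=
            mul_div_mul_right _ _ hne
    have key2 := key.congr' heq
    by_cases haF : a ∈ F
    · simpa [haF] using key2
    · simpa [haF] using key2
  · have haF : a ∉ F := fun h => haA (hFA h)
    simp only [haA, if_false, haF, zero_div]
    exact tendsto_const_nhds
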